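/- arXiv:1908.04106 — 3 statements merged into one kernel-verified Lean document; each statement's English description precedes it below -/
import Mathlib

section
/- (Theorem 2.2, optimality part.) Let K : T × T → ℝ be a symmetric measurable kernel whose associated quadratic form is nonnegative on finite signed measures, and let f : T → ℝ^m be bounded measurable. Suppose: (i) there is an m-tuple G = (G₁,…,G_m) of finite signed measures on T and an m×m matrix D such that ∫_T f_i(t) G_j(dt) = δ_{ij} for all i,j and ∫_T K(t,s) G(dt) = D f(s) for all s ∈ T; (ii) there is a finite signed measure ζ_ν on T with ∫_T K(t,s) ζ_ν(dt) = ∫_S K(s,u) ν(du) for all s ∈ T. Define c = ∫_S f(s) ν(ds) − ∫_T f(t) ζ_ν(dt) ∈ ℝ^m and Q* = ζ_ν + Σ_{j=1}^m c_j G_j. Then for every finite signed measure Q on T satisfying ∫_T f(t) Q(dt) = ∫_S f(s) ν(ds), one has M(Q) ≥ M(Q*), where M(Q) = ∬_{S×S} K dν dν − 2 ∬_{S×T} K(t,s) ν(dt) Q(ds) + ∬_{T×T} K(t,s) Q(dt) Q(ds). -/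
/-!
By Fubini, `(P, R) ↦ ∬ K(t,s) P(dt) R(ds)` is a bilinear form `B` on finite signed measures,
symmetric since `K` is, and positive semidefinite on `T` by hypothesis. Condition (ii) turns the
cross term of `M` into `B(ζ_ν, Q)`, so `M(Q) = const + B(Q,Q) - 2 B(ζ_ν, Q)`. Condition (i) makes
`Q* - ζ_ν = Σ c_j G_j` `B`-orthogonal to every measure annihilating `f`, in particular to `Q - Q*`,
because `Q*` is itself unbiased. Expanding `0 ≤ B(Q - Q*, Q - Q*)` then gives `M(Q*) ≤ M(Q)`.
-/

open MeasureTheory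

/-- Integral of a real function against a finite signed measure, via the Jordan
decomposition. -/
noncomputable def sInt {α : Type*} [MeasurableSpace α] (μ : SignedMeasure α) (g : α → ℝ) : ℝ :=
  (∫ x, g x ∂μ.toJordanDecomposition.posPart) - ∫ x, g x ∂μ.toJordanDecomposition.negPart

open Function

theorem LinearMap.BilinForm.IsSymm.apply_self_sub_two_mul_le {E : Type*} [AddCommGroup E]
    [Module ℝ E] {B : LinearMap.BilinForm ℝ E} (hB : B.IsSymm) {x y z : E}
    (hpos : 0 ≤ B (y - x) (y - x)) (horth : B (x - z) (y - x) = 0) : B x x - 2 * B z x ≤ B y y - 2 * B z y := by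
  simp only [map_sub, LinearMap.sub_apply] at hpos horth
  linarith [hB.eq x y, hB.eq x z]

section SignedIntegral

variable {α β : Type*} [MeasurableSpace α] [MeasurableSpace β] {g h : α → ℝ} {C : ℝ}

theorem integrable_of_abs_le (μ : Measure α) [IsFiniteMeasure μ] (hg : Measurable g)
    (hgC : ∀ x, |g x| ≤ C) : Integrable g μ :=
  .of_bound hg.aestronglyMeasurable C (.of_forall hgC)

theorem abs_integral_le_of_abs_le (P : Measure α) [IsFiniteMeasure P] (hgC : ∀ x, |g x| ≤ C) :
    |∫ x, g x ∂P| ≤ C * P.real Set.univ :=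
  norm_integral_le_of_norm_le_const (μ := P) (f := g) (.of_forall hgC)

theorem sInt_eq_integral_sub_integral {μ : SignedMeasure α} {P N : Measure α} [IsFiniteMeasure P]
    [IsFiniteMeasure N] (hμ : μ = P.toSignedMeasure - N.toSignedMeasure) (hg : Measurable g)
    (hgC : ∀ x, |g x| ≤ C) : sInt μ g = ∫ x, g x ∂P - ∫ x, g x ∂N := by
  set J := μ.toJordanDecomposition
  have hJ : J.posPart + N = P + J.negPart := by
    rw [← Measure.toSignedMeasure_eq_toSignedMeasure_iff, Measure.toSignedMeasure_add,
      Measure.toSignedMeasure_add]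
    exact sub_eq_sub_iff_add_eq_add.1 (μ.toSignedMeasure_toJordanDecomposition.trans hμ)
  have h := congrArg (fun ρ => ∫ x, g x ∂ρ) hJ
  simp only [integral_add_measure (integrable_of_abs_le _ hg hgC)
    (integrable_of_abs_le _ hg hgC)] at h
  unfold sInt
  linarith

theorem sInt_add_measure (μ ν : SignedMeasure α) (hg : Measurable g) (hgC : ∀ x, |g x| ≤ C) :
    sInt (μ + ν) g = sInt μ g + sInt ν g := by
  have hsum : μ + ν =
      (μ.toJordanDecomposition.posPart + ν.toJordanDecomposition.posPart).toSignedMeasure -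
      (μ.toJordanDecomposition.negPart + ν.toJordanDecomposition.negPart).toSignedMeasure := by
    rw [Measure.toSignedMeasure_add, Measure.toSignedMeasure_add, add_sub_add_comm]
    exact congrArg₂ (· + ·) μ.toSignedMeasure_toJordanDecomposition.symm
      ν.toSignedMeasure_toJordanDecomposition.symm
  rw [sInt_eq_integral_sub_integral hsum hg hgC,
    integral_add_measure (integrable_of_abs_le _ hg hgC) (integrable_of_abs_le _ hg hgC),
    integral_add_measure (integrable_of_abs_le _ hg hgC) (integrable_of_abs_le _ hg hgC)]
  unfold sInt
  ring

theorem sInt_smul_measure (μ : SignedMeasure α) (r : ℝ) (g : α → ℝ) :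
    sInt (r • μ) g = r * sInt μ g := by
  unfold sInt
  rw [SignedMeasure.toJordanDecomposition_smul_real]
  rcases le_or_gt 0 r with hr | hr
  · rw [JordanDecomposition.real_smul_posPart_nonneg _ _ hr,
      JordanDecomposition.real_smul_negPart_nonneg _ _ hr,
      integral_smul_nnreal_measure, integral_smul_nnreal_measure]
    simp only [NNReal.smul_def, Real.coe_toNNReal r hr, smul_eq_mul]
    ring
  · rw [JordanDecomposition.real_smul_posPart_neg _ _ hr,
      JordanDecomposition.real_smul_negPart_neg _ _ hr,
      integral_smul_nnreal_measure, integral_smul_nnreal_measure]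
    simp only [NNReal.smul_def, Real.coe_toNNReal (-r) (by linarith), smul_eq_mul]
    ring

noncomputable def sIntLinearMap (hg : Measurable g) (hgC : ∀ x, |g x| ≤ C) :
    SignedMeasure α →ₗ[ℝ] ℝ where
  toFun μ := sInt μ g
  map_add' μ ν := sInt_add_measure μ ν hg hgC
  map_smul' r μ := sInt_smul_measure μ r g

theorem sInt_sub_measure (μ ν : SignedMeasure α) (hg : Measurable g) (hgC : ∀ x, |g x| ≤ C) :
    sInt (μ - ν) g = sInt μ g - sInt ν g :=
  map_sub (sIntLinearMap hg hgC) μ ν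

theorem sInt_finset_sum_measure {ι : Type*} (s : Finset ι) (μ : ι → SignedMeasure α)
    (hg : Measurable g) (hgC : ∀ x, |g x| ≤ C) :
    sInt (∑ i ∈ s, μ i) g = ∑ i ∈ s, sInt (μ i) g :=
  map_sum (sIntLinearMap hg hgC) μ s

theorem sInt_add (μ : SignedMeasure α) (hg : Measurable g) (hgC : ∀ x, |g x| ≤ C)
    {C' : ℝ} (hh : Measurable h) (hhC : ∀ x, |h x| ≤ C') :
    sInt μ (fun x => g x + h x) = sInt μ g + sInt μ h := by
  unfold sInt
  rw [integral_add (integrable_of_abs_le _ hg hgC) (integrable_of_abs_le _ hh hhC),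
    integral_add (integrable_of_abs_le _ hg hgC) (integrable_of_abs_le _ hh hhC)]
  ring

theorem sInt_sub (μ : SignedMeasure α) (hg : Measurable g) (hgC : ∀ x, |g x| ≤ C)
    {C' : ℝ} (hh : Measurable h) (hhC : ∀ x, |h x| ≤ C') :
    sInt μ (fun x => g x - h x) = sInt μ g - sInt μ h := by
  unfold sInt
  rw [integral_sub (integrable_of_abs_le _ hg hgC) (integrable_of_abs_le _ hh hhC),
    integral_sub (integrable_of_abs_le _ hg hgC) (integrable_of_abs_le _ hh hhC)]
  ring

theorem sInt_const_mul (μ : SignedMeasure α) (r : ℝ) (g : α → ℝ) :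
    sInt μ (fun x => r * g x) = r * sInt μ g := by
  unfold sInt
  rw [integral_const_mul, integral_const_mul, mul_sub]

theorem sInt_finset_sum {ι : Type*} (s : Finset ι) (μ : SignedMeasure α) {g : ι → α → ℝ}
    {C : ι → ℝ} (hg : ∀ i, Measurable (g i)) (hgC : ∀ i x, |g i x| ≤ C i) :
    sInt μ (fun x => ∑ i ∈ s, g i x) = ∑ i ∈ s, sInt μ (g i) := by
  unfold sInt
  rw [integral_finsetSum _ fun i _ => integrable_of_abs_le _ (hg i) (hgC i),
    integral_finsetSum _ fun i _ => integrable_of_abs_le _ (hg i) (hgC i), Finset.sum_sub_distrib]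

theorem abs_sInt_le (μ : SignedMeasure α) (hgC : ∀ x, |g x| ≤ C) :
    |sInt μ g| ≤ C * μ.totalVariation.real Set.univ := by
  rw [SignedMeasure.totalVariation, measureReal_add_apply, mul_add]
  exact (abs_sub _ _).trans
    (add_le_add (abs_integral_le_of_abs_le _ hgC) (abs_integral_le_of_abs_le _ hgC))

theorem Measurable.sInt_prod_right {k : α → β → ℝ} (hk : Measurable (uncurry k))
    (ρ : SignedMeasure β) : Measurable fun t => sInt ρ (k t) :=
  hk.stronglyMeasurable.integral_prod_right'.measurable.sub
    hk.stronglyMeasurable.integral_prod_right'.measurable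

section Fubini

variable {k : α → β → ℝ} (hk : Measurable (uncurry k)) (hkC : ∀ t s, |k t s| ≤ C)
include hk hkC

theorem integral_sInt_comm (P : Measure α) [IsFiniteMeasure P] (ρ : SignedMeasure β) :
    ∫ t, sInt ρ (k t) ∂P = sInt ρ fun s => ∫ t, k t s ∂P := by
  have hint (Q : Measure β) [IsFiniteMeasure Q] : Integrable (fun t => ∫ s, k t s ∂Q) P :=
    integrable_of_abs_le _ hk.stronglyMeasurable.integral_prod_right'.measurable
      fun t => abs_integral_le_of_abs_le _ (hkC t)
  unfold sInt
  rw [integral_sub (hint _) (hint _),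
    integral_integral_swap (integrable_of_abs_le _ hk fun p => hkC p.1 p.2),
    integral_integral_swap (integrable_of_abs_le _ hk fun p => hkC p.1 p.2)]

theorem sInt_comm (μ : SignedMeasure α) (ρ : SignedMeasure β) :
    (sInt μ fun t => sInt ρ (k t)) = sInt ρ fun s => sInt μ fun t => k t s := by
  have hmeas (P : Measure α) [IsFiniteMeasure P] : Measurable fun s => ∫ t, k t s ∂P :=
    (hk.comp measurable_swap).stronglyMeasurable.integral_prod_right'.measurable
  have hbound (P : Measure α) [IsFiniteMeasure P] (s : β) :
      |∫ t, k t s ∂P| ≤ C * P.real Set.univ :=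
    abs_integral_le_of_abs_le _ fun t => hkC t s
  conv_lhs => rw [sInt]
  rw [integral_sInt_comm hk hkC, integral_sInt_comm hk hkC]
  exact (sInt_sub ρ (hmeas _) (hbound _) (hmeas _) (hbound _)).symm

end Fubini

end SignedIntegral

section KernelForm

variable {α β : Type*} [MeasurableSpace α] [MeasurableSpace β] {k : α → α → ℝ} {C : ℝ}

noncomputable def kernelForm (k : α → α → ℝ) (hk : Measurable (uncurry k))
    (hkC : ∀ t s, |k t s| ≤ C) : LinearMap.BilinForm ℝ (SignedMeasure α) :=
  LinearMap.mk₂ ℝ (fun P R => sInt P fun t => sInt R (k t))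
    (fun P P' R => sInt_add_measure P P' (hk.sInt_prod_right R)
      fun _ => abs_sInt_le R fun _ => hkC _ _)
    (fun r P R => sInt_smul_measure P r _)
    (fun P R R' => by
      simp only [sInt_add_measure R R' hk.of_uncurry_left (hkC _)]
      exact sInt_add P (hk.sInt_prod_right R) (fun _ => abs_sInt_le R (hkC _))
        (hk.sInt_prod_right R') (fun _ => abs_sInt_le R' (hkC _)))
    (fun r P R => by
      simp only [sInt_smul_measure, smul_eq_mul]
      exact sInt_const_mul P r _)

variable (hk : Measurable (uncurry k)) (hkC : ∀ t s, |k t s| ≤ C)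

theorem kernelForm_apply (P R : SignedMeasure α) :
    kernelForm k hk hkC P R = sInt P fun t => sInt R (k t) :=
  rfl

theorem kernelForm_isSymm (hsymm : ∀ t s, k t s = k s t) : (kernelForm k hk hkC).IsSymm := by
  refine ⟨fun P R => ?_⟩
  rw [kernelForm_apply, kernelForm_apply, sInt_comm hk hkC]
  simp only [hsymm]

theorem kernelForm_apply_eq_of_potential_eq {l : β → α → ℝ} {C' : ℝ}
    (hl : Measurable (uncurry l)) (hlC : ∀ u s, |l u s| ≤ C') {ν : SignedMeasure β}
    {ζ : SignedMeasure α} (hζ : ∀ s, (sInt ζ fun t => k t s) = sInt ν fun u => l u s)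
    (Q : SignedMeasure α) :
    kernelForm k hk hkC ζ Q = sInt ν fun u => sInt Q (l u) := by
  rw [kernelForm_apply, sInt_comm hk hkC, sInt_comm hl hlC]
  simp only [hζ]

theorem kernelForm_apply_eq_zero_of_potential_eq_sum {ι : Type*} [Fintype ι]
    {G : SignedMeasure α} {a : ι → ℝ} {φ : ι → α → ℝ} {C' : ℝ} (hφ : ∀ i, Measurable (φ i))
    (hφC : ∀ i x, |φ i x| ≤ C') (hG : ∀ s, (sInt G fun t => k t s) = ∑ i, a i * φ i s)
    {P : SignedMeasure α} (hP : ∀ i, sInt P (φ i) = 0) :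
    kernelForm k hk hkC G P = 0 := by
  rw [kernelForm_apply, sInt_comm hk hkC]
  simp only [hG]
  rw [sInt_finset_sum _ _ (fun i => (hφ i).const_mul (a i))
    (C := fun i => |a i| * C') fun i x => by
      rw [abs_mul]; exact mul_le_mul_of_nonneg_left (hφC i x) (abs_nonneg _)]
  simp [sInt_const_mul, hP]

end KernelForm

theorem blup_average_optimality_general {d m : ℕ}
    (T S : Set (Fin d → ℝ))
    (K : (Fin d → ℝ) → (Fin d → ℝ) → ℝ)
    (hKmeas : Measurable (Function.uncurry K))
    (hKbd : ∃ C, ∀ t s, |K t s| ≤ C)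
    (hKsym : ∀ t s, K t s = K s t)
    -- nonnegativity of the quadratic form on finite signed measures on `T`:
    (hKpos : ∀ R : SignedMeasure T, 0 ≤ sInt R fun t => sInt R fun s => K t.1 s.1)
    (f : (Fin d → ℝ) → Fin m → ℝ)
    (hfmeas : ∀ i, Measurable fun t => f t i)
    (hfbd : ∃ C, ∀ t i, |f t i| ≤ C)
    (ν : SignedMeasure S)
    -- (i) existence of the BLUE measure `G` with matrix `D`:
    (G : Fin m → SignedMeasure T) (D : Fin m → Fin m → ℝ)
    (hG1 : ∀ i j, sInt (G j) (fun t => f t.1 i) = if i = j then 1 else 0)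
    (hG2 : ∀ (s : T) (k : Fin m),
      sInt (G k) (fun t => K t.1 s.1) = ∑ j, D k j * f s.1 j)
    -- (ii) existence of the measure `ζ_ν`:
    (ζν : SignedMeasure T)
    (hζν : ∀ s : T, sInt ζν (fun t => K t.1 s.1) = sInt ν fun u => K s.1 u.1)
    (c : Fin m → ℝ)
    (hc : ∀ i, c i = (sInt ν fun s => f s.1 i) - sInt ζν fun t => f t.1 i)
    (Qstar : SignedMeasure T)
    (hQstar : Qstar = ζν + ∑ j, c j • G j)
    (M : SignedMeasure T → ℝ)
    (hM : ∀ Q : SignedMeasure T,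
      M Q = (sInt ν fun t => sInt ν fun s => K t.1 s.1)
        - 2 * (sInt ν fun t => sInt Q fun s => K t.1 s.1)
        + (sInt Q fun t => sInt Q fun s => K t.1 s.1))
    (Q : SignedMeasure T)
    (hQ : ∀ i, sInt Q (fun t => f t.1 i) = sInt ν fun s => f s.1 i) :
    M Qstar ≤ M Q := by
  obtain ⟨CK, hCK⟩ := hKbd
  obtain ⟨Cf, hCf⟩ := hfbd
  have hkT : Measurable (uncurry fun t s : T => K t.1 s.1) :=
    hKmeas.comp (measurable_subtype_coe.prodMap measurable_subtype_coe)
  have hkS : Measurable (uncurry fun (u : S) (s : T) => K u.1 s.1) :=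
    hKmeas.comp (measurable_subtype_coe.prodMap measurable_subtype_coe)
  have hfT (i : Fin m) : Measurable fun t : T => f t.1 i := (hfmeas i).comp measurable_subtype_coe
  let B := kernelForm (fun t s : T => K t.1 s.1) hkT fun _ _ => hCK _ _
  have hcross (P : SignedMeasure T) : (sInt ν fun u => sInt P fun s => K u.1 s.1) = B ζν P :=
    (kernelForm_apply_eq_of_potential_eq hkT _ hkS (fun _ _ => hCK _ _)
      (fun s => by simpa only [hKsym s.1] using hζν s) P).symm
  have hQstar_unbiased (i : Fin m) :
      sInt Qstar (fun t => f t.1 i) = sInt ν fun s => f s.1 i := by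
    rw [hQstar, sInt_add_measure _ _ (hfT i) fun _ => hCf _ _,
      sInt_finset_sum_measure _ _ (hfT i) fun _ => hCf _ _]
    simp [sInt_smul_measure, hG1, hc]
  have horth : B (Qstar - ζν) (Q - Qstar) = 0 := by
    rw [show Qstar - ζν = ∑ j, c j • G j by rw [hQstar, add_sub_cancel_left], map_sum,
      LinearMap.sum_apply]
    refine Finset.sum_eq_zero fun j _ => ?_
    rw [map_smul, LinearMap.smul_apply, kernelForm_apply_eq_zero_of_potential_eq_sum hkT _ hfT
      (fun _ _ => hCf _ _) (hG2 · j) fun i => ?_, smul_zero]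
    rw [sInt_sub_measure _ _ (hfT i) fun _ => hCf _ _, hQ, hQstar_unbiased, sub_self]
  have hmin : B Qstar Qstar - 2 * B ζν Qstar ≤ B Q Q - 2 * B ζν Q :=
    (kernelForm_isSymm hkT _ fun t s => hKsym t.1 s.1).apply_self_sub_two_mul_le
      (hKpos (Q - Qstar)) horth
  have hquad (P : SignedMeasure T) : (sInt P fun t => sInt P fun s => K t.1 s.1) = B P P := rfl
  rw [hM, hM, hcross, hcross, hquad, hquad]
  linarith

/-- Theorem 2.2, optimality part.  Under Assumption A′, the measure
`Q* = ζ_ν + Σ_j c_j G_j` minimizes the MSE functional `M` among all finite signed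
measures `Q` on `T` satisfying the unbiasedness condition `∫_T f dQ = ∫_S f dν`. -/
theorem blup_average_optimality {d m : ℕ}
    (T S : Set (Fin d → ℝ)) (hT : MeasurableSet T) (hS : MeasurableSet S)
    (K : (Fin d → ℝ) → (Fin d → ℝ) → ℝ)
    (hKmeas : Measurable (Function.uncurry K))
    (hKbd : ∃ C, ∀ t s, |K t s| ≤ C)
    (hKsym : ∀ t s, K t s = K s t)
    -- nonnegativity of the quadratic form on finite signed measures on `T`:
    (hKpos : ∀ R : SignedMeasure T, 0 ≤ sInt R fun t => sInt R fun s => K t.1 s.1)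
    (f : (Fin d → ℝ) → Fin m → ℝ)
    (hfmeas : ∀ i, Measurable fun t => f t i)
    (hfbd : ∃ C, ∀ t i, |f t i| ≤ C)
    (ν : SignedMeasure S)
    -- (i) existence of the BLUE measure `G` with matrix `D`:
    (G : Fin m → SignedMeasure T) (D : Fin m → Fin m → ℝ)
    (hG1 : ∀ i j, sInt (G j) (fun t => f t.1 i) = if i = j then 1 else 0)
    (hG2 : ∀ (s : T) (k : Fin m),
      sInt (G k) (fun t => K t.1 s.1) = ∑ j, D k j * f s.1 j)
    -- (ii) existence of the measure `ζ_ν`: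
    (ζν : SignedMeasure T)
    (hζν : ∀ s : T, sInt ζν (fun t => K t.1 s.1) = sInt ν fun u => K s.1 u.1)
    (c : Fin m → ℝ)
    (hc : ∀ i, c i = (sInt ν fun s => f s.1 i) - sInt ζν fun t => f t.1 i)
    (Qstar : SignedMeasure T)
    (hQstar : Qstar = ζν + ∑ j, c j • G j)
    (M : SignedMeasure T → ℝ)
    (hM : ∀ Q : SignedMeasure T,
      M Q = (sInt ν fun t => sInt ν fun s => K t.1 s.1)
        - 2 * (sInt ν fun t => sInt Q fun s => K t.1 s.1)
        + (sInt Q fun t => sInt Q fun s => K t.1 s.1))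
    (Q : SignedMeasure T)
    (hQ : ∀ i, sInt Q (fun t => f t.1 i) = sInt ν fun s => f s.1 i) :
    M Qstar ≤ M Q :=
  blup_average_optimality_general T S K hKmeas hKbd hKsym hKpos f hfmeas hfbd ν G D hG1 hG2 ζν hζν c
    hc Qstar hQstar M hM Q hQ
end

section
/- (Classical discrete kriging BLUP, MSE block formula.) Let Σ be a symmetric positive definite N×N real matrix, X an N×m real matrix of full column rank m, f₀ ∈ ℝ^m, K₀ ∈ ℝ^N, k₀ ∈ ℝ, C = XᵀΣ⁻¹X, and Q* = Σ⁻¹K₀ + Σ⁻¹X C⁻¹ (f₀ − XᵀΣ⁻¹K₀). Then the block matrix B = [[0, Xᵀ],[X, Σ]] of size (m+N)×(m+N) is invertible and k₀ − 2K₀ᵀQ* + Q*ᵀΣQ* = k₀ − [f₀; K₀]ᵀ B⁻¹ [f₀; K₀], where [f₀; K₀] denotes the concatenated vector in ℝ^{m+N}. -/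
/-!
The BLUP `Q*` together with `-w`, where `w = C⁻¹ (f₀ - XᵀΣ⁻¹K₀)`, solves the kriging system
`B (-w, Q*) = (f₀, K₀)`: indeed `Σ Q* = K₀ + X w` and `Xᵀ Q* = f₀`. Hence `B⁻¹ (f₀, K₀) = (-w, Q*)`,
and both sides of the formula reduce to `k₀ - K₀ ⬝ Q* + f₀ ⬝ w`, using `Q* ⬝ X w = Xᵀ Q* ⬝ w = f₀ ⬝ w`.
`B` is invertible because its Schur complement with respect to `Σ` is `-C`, and `C` is positive
definite since `X` is injective.
-/

open Matrix

namespace Matrix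

variable {R : Type*} [CommRing R] {n p : Type*} [Fintype n] [Fintype p]

section KrigingSystem

variable (Sig : Matrix n n R) (X : Matrix n p R) {f : p → R} {K q : n → R} {w : p → R}

theorem fromBlocks_zero_mulVec_eq_of_kriging (hSq : Sig *ᵥ q = K + X *ᵥ w)
    (hXq : Xᵀ *ᵥ q = f) :
    fromBlocks 0 Xᵀ X Sig *ᵥ Sum.elim (-w) q = Sum.elim f K := by
  rw [fromBlocks_mulVec, Sum.elim_comp_inl, Sum.elim_comp_inr, zero_mulVec, zero_add, hXq, hSq,
    mulVec_neg, neg_add_cancel_comm_assoc]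

theorem mse_eq_of_kriging (k : R) (hSq : Sig *ᵥ q = K + X *ᵥ w) (hXq : Xᵀ *ᵥ q = f) :
    k - 2 * (K ⬝ᵥ q) + q ⬝ᵥ Sig *ᵥ q = k - Sum.elim f K ⬝ᵥ Sum.elim (-w) q := by
  have hquad : q ⬝ᵥ Sig *ᵥ q = K ⬝ᵥ q + f ⬝ᵥ w := by
    rw [hSq, dotProduct_add, dotProduct_mulVec, ← mulVec_transpose, hXq, dotProduct_comm q K]
  rw [hquad, sumElim_dotProduct_sumElim, dotProduct_neg]
  ring

end KrigingSystem

variable [DecidableEq n]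

theorem mulVec_inv_mulVec_add_inv_mulVec (Sig : Matrix n n R) (hSig : IsUnit Sig.det)
    (K v : n → R) :
    Sig *ᵥ (Sig⁻¹ *ᵥ K + Sig⁻¹ *ᵥ v) = K + v := by
  rw [mulVec_add, mulVec_mulVec, mulVec_mulVec, mul_nonsing_inv _ hSig, one_mulVec, one_mulVec]

theorem transpose_mulVec_blup_eq [DecidableEq p] (Sig : Matrix n n R) (X : Matrix n p R)
    (hC : IsUnit (Xᵀ * Sig⁻¹ * X).det) (f : p → R) (K : n → R) :
    Xᵀ *ᵥ (Sig⁻¹ *ᵥ K + Sig⁻¹ *ᵥ (X *ᵥ ((Xᵀ * Sig⁻¹ * X)⁻¹ *ᵥ (f - Xᵀ *ᵥ (Sig⁻¹ *ᵥ K))))) = f := by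
  rw [mulVec_add, mulVec_mulVec, mulVec_mulVec, mulVec_mulVec, mulVec_mulVec,
    mul_nonsing_inv _ hC, one_mulVec, add_sub_cancel]

theorem isUnit_det_fromBlocks_zero₁₁ [DecidableEq p] {Sig : Matrix n n R} (hSig : IsUnit Sig.det)
    {X : Matrix n p R} {Y : Matrix p n R} (hC : IsUnit (Y * Sig⁻¹ * X).det) :
    IsUnit (fromBlocks 0 Y X Sig).det := by
  let _ := invertibleOfIsUnitDet Sig hSig
  rw [det_fromBlocks₂₂, invOf_eq_nonsing_inv, zero_sub, det_neg]
  exact hSig.mul ((isUnit_neg_one.pow _).mul hC)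

end Matrix

theorem Matrix.PosDef.isUnit_det_transpose_mul_inv_mul {n p : Type*} [Fintype n] [Fintype p]
    [DecidableEq n] [DecidableEq p] {Sig : Matrix n n ℝ} (hSig : Sig.PosDef) {X : Matrix n p ℝ}
    (hX : Function.Injective X.mulVec) :
    IsUnit (Xᵀ * Sig⁻¹ * X).det := by
  have hC := hSig.inv.conjTranspose_mul_mul_same hX
  rw [conjTranspose_eq_transpose_of_trivial] at hC
  exact (isUnit_iff_isUnit_det _).1 hC.isUnit

theorem discrete_kriging_mse_block_formula_general {N m : ℕ}
    (Sig : Matrix (Fin N) (Fin N) ℝ) (hpd : Sig.PosDef)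
    (X : Matrix (Fin N) (Fin m) ℝ) (hX : Function.Injective X.mulVec)
    (f0 : Fin m → ℝ) (K0 : Fin N → ℝ) (k0 : ℝ)
    (C : Matrix (Fin m) (Fin m) ℝ) (hC : C = Xᵀ * Sig⁻¹ * X)
    (Qstar : Fin N → ℝ)
    (hQstar : Qstar = Sig⁻¹.mulVec K0
      + Sig⁻¹.mulVec (X.mulVec (C⁻¹.mulVec (f0 - Xᵀ.mulVec (Sig⁻¹.mulVec K0)))))
    (B : Matrix (Fin m ⊕ Fin N) (Fin m ⊕ Fin N) ℝ)
    (hB : B = Matrix.fromBlocks (0 : Matrix (Fin m) (Fin m) ℝ) Xᵀ X Sig) :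
    IsUnit B.det ∧
    k0 - 2 * (K0 ⬝ᵥ Qstar) + Qstar ⬝ᵥ Sig.mulVec Qstar
      = k0 - Sum.elim f0 K0 ⬝ᵥ B⁻¹.mulVec (Sum.elim f0 K0) := by
  subst hC hB
  have hSig : IsUnit Sig.det := (isUnit_iff_isUnit_det _).1 hpd.isUnit
  have hCU := hpd.isUnit_det_transpose_mul_inv_mul hX
  have hBU := isUnit_det_fromBlocks_zero₁₁ hSig hCU
  set w := (Xᵀ * Sig⁻¹ * X)⁻¹ *ᵥ (f0 - Xᵀ *ᵥ (Sig⁻¹ *ᵥ K0))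
  have hSq : Sig *ᵥ Qstar = K0 + X *ᵥ w := hQstar ▸ mulVec_inv_mulVec_add_inv_mulVec Sig hSig K0 (X *ᵥ w)
  have hXq : Xᵀ *ᵥ Qstar = f0 := hQstar ▸ transpose_mulVec_blup_eq Sig X hCU f0 K0
  let _ := invertibleOfIsUnitDet _ hBU
  refine ⟨hBU, ?_⟩
  rw [inv_mulVec_eq_vec (fromBlocks_zero_mulVec_eq_of_kriging Sig X hSq hXq).symm]
  exact mse_eq_of_kriging Sig X k0 hSq hXq

/-- classical discrete kriging BLUP, MSE block formula.  With `Σ`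
symmetric positive definite and `X` of full column rank, the block matrix
`B = [[0, Xᵀ],[X, Σ]]` is invertible and the mean squared error of the BLUP `Q*` satisfies
`k₀ − 2K₀ᵀQ* + Q*ᵀΣQ* = k₀ − [f₀; K₀]ᵀ B⁻¹ [f₀; K₀]`. -/
theorem discrete_kriging_mse_block_formula {N m : ℕ}
    (Sig : Matrix (Fin N) (Fin N) ℝ) (hsym : Sig.IsSymm) (hpd : Sig.PosDef)
    (X : Matrix (Fin N) (Fin m) ℝ) (hX : Function.Injective X.mulVec)
    (f0 : Fin m → ℝ) (K0 : Fin N → ℝ) (k0 : ℝ)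
    (C : Matrix (Fin m) (Fin m) ℝ) (hC : C = Xᵀ * Sig⁻¹ * X)
    (Qstar : Fin N → ℝ)
    (hQstar : Qstar = Sig⁻¹.mulVec K0
      + Sig⁻¹.mulVec (X.mulVec (C⁻¹.mulVec (f0 - Xᵀ.mulVec (Sig⁻¹.mulVec K0)))))
    (B : Matrix (Fin m ⊕ Fin N) (Fin m ⊕ Fin N) ℝ)
    (hB : B = Matrix.fromBlocks (0 : Matrix (Fin m) (Fin m) ℝ) Xᵀ X Sig) :
    IsUnit B.det ∧
    k0 - 2 * (K0 ⬝ᵥ Qstar) + Qstar ⬝ᵥ Sig.mulVec Qstar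
      = k0 - Sum.elim f0 K0 ⬝ᵥ B⁻¹.mulVec (Sum.elim f0 K0) :=
  discrete_kriging_mse_block_formula_general Sig hpd X hX f0 K0 k0 C hC Qstar hQstar B hB
end

section
/- (Appendix, Brownian motion, location scale model.) Let 0 < A < B < t₀ and K(t,s) = min(t,s). Then for every finite signed measure Q on [A,B] with Q([A,B]) = 1, one has t₀ − 2 ∫_{[A,B]} min(t, t₀) Q(dt) + ∬_{[A,B]×[A,B]} min(t,s) Q(dt)Q(ds) ≥ t₀ − B, with equality for Q = δ_B. In other words, in the location scale model y(t) = θ + ε(t) with Brownian motion error observed on [A,B], the BLUP of y(t₀) is ŷ(t₀) = y(B) and its mean squared error is t₀ − B. -/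
open MeasureTheory
open scoped ENNReal

/-!
For `t, s ≥ 0` one has `min t s = ∫₀^∞ 1{u < t} 1{u < s} du`, so by Tonelli the form
`⟪μ, ν⟫ = ∬ min t s dμ(t) dν(s)` of two finite measures on `[A, B]` equals
`∫₀^∞ μ(u, ∞) ν(u, ∞) du`. Hence it is symmetric and `2⟪μ, ν⟫ ≤ ⟪μ, μ⟫ + ⟪ν, ν⟫`.
On `[A, B]` both `min t t₀` and `min t B` equal `t`, so the mean squared error minus `t₀ - B`
is the form evaluated at the signed measure `Q - δ_B = P - (δ_B + N)`, where `P - N` is the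
Jordan decomposition of `Q`; this is nonnegative, and it vanishes at `Q = δ_B`.
The form is taken `ℝ≥0∞`-valued so that Tonelli applies without integrability side conditions.
-/

open Set

lemma ENNReal.two_mul_le_add_sq (a b : ℝ≥0∞) : 2 * a * b ≤ a ^ 2 + b ^ 2 := by
  induction a using ENNReal.recTopCoe with
  | top => simp
  | coe a =>
    induction b using ENNReal.recTopCoe with
    | top => simp
    | coe b => exact_mod_cast _root_.two_mul_le_add_sq a b

section MinForm

variable {α : Type*} [MeasurableSpace α] {f : α → ℝ} {C : ℝ}

noncomputable def minForm (f : α → ℝ) (μ ν : Measure α) : ℝ≥0∞ :=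
  ∫⁻ x, ∫⁻ y, ENNReal.ofReal (min (f x) (f y)) ∂ν ∂μ

lemma measurable_lintegral_ofReal_min (hf : Measurable f) (ν : Measure α) [SFinite ν] :
    Measurable fun x => ∫⁻ y, ENNReal.ofReal (min (f x) (f y)) ∂ν :=
  Measurable.lintegral_prod_right' (f := fun p : α × α => ENNReal.ofReal (min (f p.1) (f p.2)))
    (by fun_prop)

lemma minForm_eq_lintegral_mul (hf : Measurable f) (hf0 : 0 ≤ f) (μ ν : Measure α)
    [SFinite μ] [SFinite ν] :
    minForm f μ ν = ∫⁻ u in Ioi 0, μ {x | u < f x} * ν {y | u < f y} := by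
  have layer_cake : ∀ x, ∫⁻ y, ENNReal.ofReal (min (f x) (f y)) ∂ν
      = ∫⁻ u in Ioi 0, ν {y | u < min (f x) (f y)} := fun x =>
    lintegral_eq_lintegral_meas_lt ν (.of_forall fun y => le_min (hf0 x) (hf0 y)) (by fun_prop)
  have hmeas : Measurable fun p : α × ℝ => ν {y | p.2 < min (f p.1) (f y)} :=
    measurable_measure_prodMk_left (s := {q : (α × ℝ) × α | q.1.2 < min (f q.1.1) (f q.2)})
      (measurableSet_lt (by fun_prop) (by fun_prop))
  have slice : ∀ u x, ν {y | u < min (f x) (f y)}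
      = {x | u < f x}.indicator (fun _ => ν {y | u < f y}) x := by
    intro u x
    by_cases h : u < f x <;> simp [h]
  simp_rw [minForm, layer_cake]
  rw [lintegral_lintegral_swap hmeas.aemeasurable]
  refine lintegral_congr fun u => ?_
  simp_rw [slice u]
  rw [lintegral_indicator_const (measurableSet_lt measurable_const hf), mul_comm]

lemma minForm_comm (hf : Measurable f) (hf0 : 0 ≤ f) (μ ν : Measure α) [SFinite μ] [SFinite ν] :
    minForm f μ ν = minForm f ν μ := by
  simp_rw [minForm_eq_lintegral_mul hf hf0, mul_comm]

lemma two_mul_minForm_le (hf : Measurable f) (hf0 : 0 ≤ f) (μ ν : Measure α)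
    [SFinite μ] [SFinite ν] :
    2 * minForm f μ ν ≤ minForm f μ μ + minForm f ν ν := by
  have hanti : ∀ ρ : Measure α, Antitone fun u : ℝ => ρ {x | u < f x} :=
    fun ρ u v huv => measure_mono fun x hx => huv.trans_lt hx
  simp_rw [minForm_eq_lintegral_mul hf hf0, ← lintegral_const_mul' 2 _ (by norm_num)]
  rw [← lintegral_add_left (by exact (hanti μ).measurable.mul (hanti μ).measurable)]
  refine lintegral_mono fun u => ?_
  simpa [mul_assoc, sq] using ENNReal.two_mul_le_add_sq (μ {x | u < f x}) (ν {x | u < f x})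

lemma minForm_add_left (μ μ' ν : Measure α) :
    minForm f (μ + μ') ν = minForm f μ ν + minForm f μ' ν :=
  lintegral_add_measure _ _ _

lemma minForm_add_right (hf : Measurable f) (μ ν ν' : Measure α) [SFinite ν] :
    minForm f μ (ν + ν') = minForm f μ ν + minForm f μ ν' := by
  simp_rw [minForm, lintegral_add_measure]
  exact lintegral_add_left (measurable_lintegral_ofReal_min hf ν) _

lemma lintegral_ofReal_min_le (hfC : ∀ x, f x ≤ C) (ν : Measure α) (x : α) :
    ∫⁻ y, ENNReal.ofReal (min (f x) (f y)) ∂ν ≤ ENNReal.ofReal C * ν univ :=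
  (lintegral_mono fun y => ENNReal.ofReal_le_ofReal ((min_le_right _ _).trans (hfC y))).trans
    (lintegral_const _).le

lemma minForm_ne_top (hfC : ∀ x, f x ≤ C) (μ ν : Measure α)
    [IsFiniteMeasure μ] [IsFiniteMeasure ν] : minForm f μ ν ≠ ∞ := by
  refine ((lintegral_mono (lintegral_ofReal_min_le hfC ν)).trans_lt ?_).ne
  rw [lintegral_const]
  exact ENNReal.mul_lt_top (ENNReal.mul_lt_top ENNReal.ofReal_lt_top (measure_lt_top _ _))
    (measure_lt_top _ _)

lemma minForm_dirac_left (hf : Measurable f) {a : α} (ha : ∀ x, f x ≤ f a) (ν : Measure α)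
    [SFinite ν] : minForm f (Measure.dirac a) ν = ∫⁻ y, ENNReal.ofReal (f y) ∂ν := by
  rw [minForm, lintegral_dirac' a (measurable_lintegral_ofReal_min hf ν)]
  simp_rw [min_eq_right (ha _)]

lemma integral_min_eq_toReal (hf : Measurable f) (hf0 : 0 ≤ f) (ν : Measure α) (x : α) :
    ∫ y, min (f x) (f y) ∂ν = (∫⁻ y, ENNReal.ofReal (min (f x) (f y)) ∂ν).toReal :=
  integral_eq_lintegral_of_nonneg_ae (.of_forall fun y => le_min (hf0 x) (hf0 y))
    (by fun_prop)

lemma integral_integral_min_eq_toReal_minForm (hf : Measurable f) (hf0 : 0 ≤ f)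
    (hfC : ∀ x, f x ≤ C) (μ ν : Measure α) [IsFiniteMeasure ν] :
    ∫ x, ∫ y, min (f x) (f y) ∂ν ∂μ = (minForm f μ ν).toReal := by
  simp_rw [integral_min_eq_toReal hf hf0]
  exact integral_toReal (measurable_lintegral_ofReal_min hf ν).aemeasurable
    (.of_forall fun x => (lintegral_ofReal_min_le hfC ν x).trans_lt
      (ENNReal.mul_lt_top ENNReal.ofReal_lt_top (measure_lt_top _ _)))

lemma integrable_integral_min (hf : Measurable f) (hf0 : 0 ≤ f)
    (hfC : ∀ x, f x ≤ C) (μ ν : Measure α) [IsFiniteMeasure μ] [IsFiniteMeasure ν] :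
    Integrable (fun x => ∫ y, min (f x) (f y) ∂ν) μ := by
  simp_rw [integral_min_eq_toReal hf hf0]
  exact integrable_toReal_of_lintegral_ne_top (measurable_lintegral_ofReal_min hf ν).aemeasurable
    (minForm_ne_top hfC μ ν)

lemma two_mul_toReal_minForm_le (hf : Measurable f) (hf0 : 0 ≤ f) (hfC : ∀ x, f x ≤ C)
    (μ ν : Measure α) [IsFiniteMeasure μ] [IsFiniteMeasure ν] :
    2 * (minForm f μ ν).toReal ≤ (minForm f μ μ).toReal + (minForm f ν ν).toReal := by
  have h := ENNReal.toReal_mono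
    (ENNReal.add_ne_top.2 ⟨minForm_ne_top hfC μ μ, minForm_ne_top hfC ν ν⟩)
    (two_mul_minForm_le hf hf0 μ ν)
  rwa [ENNReal.toReal_mul, ENNReal.toReal_ofNat,
    ENNReal.toReal_add (minForm_ne_top hfC μ μ) (minForm_ne_top hfC ν ν)] at h

lemma toReal_minForm_add_left (hfC : ∀ x, f x ≤ C) (μ μ' ν : Measure α)
    [IsFiniteMeasure μ] [IsFiniteMeasure μ'] [IsFiniteMeasure ν] :
    (minForm f (μ + μ') ν).toReal = (minForm f μ ν).toReal + (minForm f μ' ν).toReal := by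
  rw [minForm_add_left, ENNReal.toReal_add (minForm_ne_top hfC μ ν) (minForm_ne_top hfC μ' ν)]

lemma toReal_minForm_add_right (hf : Measurable f) (hfC : ∀ x, f x ≤ C) (μ ν ν' : Measure α)
    [IsFiniteMeasure μ] [IsFiniteMeasure ν] [IsFiniteMeasure ν'] :
    (minForm f μ (ν + ν')).toReal = (minForm f μ ν).toReal + (minForm f μ ν').toReal := by
  rw [minForm_add_right hf, ENNReal.toReal_add (minForm_ne_top hfC μ ν) (minForm_ne_top hfC μ ν')]

lemma integral_eq_toReal_minForm_dirac (hf : Measurable f) (hf0 : 0 ≤ f) {a : α}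
    (ha : ∀ x, f x ≤ f a) (ν : Measure α) [SFinite ν] :
    ∫ y, f y ∂ν = (minForm f (Measure.dirac a) ν).toReal := by
  rw [minForm_dirac_left hf ha,
    integral_eq_lintegral_of_nonneg_ae (.of_forall hf0) hf.aestronglyMeasurable]

lemma integral_sub_integral_min (hf : Measurable f) (hf0 : 0 ≤ f) (hfC : ∀ x, f x ≤ C)
    (μ ν ν' : Measure α) [IsFiniteMeasure μ] [IsFiniteMeasure ν] [IsFiniteMeasure ν'] :
    ∫ x, (∫ y, min (f x) (f y) ∂ν - ∫ y, min (f x) (f y) ∂ν') ∂μ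
      = (minForm f μ ν).toReal - (minForm f μ ν').toReal := by
  rw [integral_sub (integrable_integral_min hf hf0 hfC μ ν)
      (integrable_integral_min hf hf0 hfC μ ν'),
    integral_integral_min_eq_toReal_minForm hf hf0 hfC,
    integral_integral_min_eq_toReal_minForm hf hf0 hfC]

lemma two_mul_sInt_le_sInt_sInt_min_add (hf : Measurable f) (hf0 : 0 ≤ f) {a : α}
    (ha : ∀ x, f x ≤ f a) (Q : SignedMeasure α) :
    2 * sInt Q f ≤ sInt Q (fun x => sInt Q fun y => min (f x) (f y)) + f a := by
  simp only [sInt]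
  set P := Q.toJordanDecomposition.posPart
  set N := Q.toJordanDecomposition.negPart
  rw [integral_sub_integral_min hf hf0 ha P, integral_sub_integral_min hf hf0 ha N,
    integral_eq_toReal_minForm_dirac hf hf0 ha P, integral_eq_toReal_minForm_dirac hf hf0 ha N]
  have psd := two_mul_toReal_minForm_le hf hf0 ha (Measure.dirac a + N) P
  simp only [toReal_minForm_add_left ha, toReal_minForm_add_right hf ha] at psd
  have dirac_dirac : (minForm f (Measure.dirac a) (Measure.dirac a)).toReal = f a := by
    rw [← integral_eq_toReal_minForm_dirac hf hf0 ha, integral_dirac' _ _ hf.stronglyMeasurable]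
  linarith [congrArg ENNReal.toReal (minForm_comm hf hf0 P N),
    congrArg ENNReal.toReal (minForm_comm hf hf0 (Measure.dirac a) N)]

end MinForm

lemma sInt_toSignedMeasure {α : Type*} [MeasurableSpace α] (μ : Measure α) [IsFiniteMeasure μ]
    (g : α → ℝ) : sInt μ.toSignedMeasure g = ∫ x, g x ∂μ := by
  have hμ : μ.toSignedMeasure.toJordanDecomposition = ⟨μ, 0, .zero_right⟩ := by
    rw [← JordanDecomposition.toJordanDecomposition_toSignedMeasure ⟨μ, 0, .zero_right⟩]
    simp [JordanDecomposition.toSignedMeasure]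
  simp [sInt, hμ]

/-- Appendix, Brownian motion, location scale model.  For
`0 < A < B < t₀` and `K(t,s) = min(t,s)`, every finite signed measure `Q` on `[A,B]`
of total mass one satisfies
`t₀ − 2∫ min(t,t₀) Q(dt) + ∬ min(t,s) Q(dt)Q(ds) ≥ t₀ − B`, with equality for `Q = δ_B`:
the BLUP of `y(t₀)` is `y(B)` with mean squared error `t₀ − B`. -/
theorem brownian_location_scale_blup (A B t0 : ℝ)
    (hA : 0 < A) (hAB : A < B) (hBt0 : B < t0) :
    (∀ Q : SignedMeasure (Set.Icc A B), Q Set.univ = 1 →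
      t0 - B ≤ t0 - 2 * (sInt Q fun t => min t.1 t0)
        + (sInt Q fun t => sInt Q fun s => min t.1 s.1)) ∧
    (∀ Qδ : SignedMeasure (Set.Icc A B),
      Qδ = (Measure.dirac (⟨B, le_of_lt hAB, le_refl B⟩ : Set.Icc A B)).toSignedMeasure →
      t0 - 2 * (sInt Qδ fun t => min t.1 t0)
        + (sInt Qδ fun t => sInt Qδ fun s => min t.1 s.1) = t0 - B) := by
  have min_t0 : (fun t : Set.Icc A B => min t.1 t0) = Subtype.val :=
    funext fun t => min_eq_left (t.2.2.trans hBt0.le)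
  refine ⟨fun Q _ => ?_, fun Qδ hQδ => ?_⟩
  · rw [min_t0]
    linarith [two_mul_sInt_le_sInt_sInt_min_add measurable_subtype_coe
      (fun t => hA.le.trans t.2.1) (a := ⟨B, hAB.le, le_rfl⟩) (fun t => t.2.2) Q]
  · subst hQδ
    simp only [min_t0, sInt_toSignedMeasure, integral_dirac, min_self]
    ring
end
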